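/- Let R be a commutative ring and x_1, x_2, x_3, … elements of R. For all integers m ≥ 1, n ≥ 1 and 1 ≤ t ≤ n, the sum over all weakly increasing sequences t ≤ j_1 ≤ j_2 ≤ … ≤ j_{m−1} ≤ n of the products ∏_{k=1}^{m−1} (x_{j_k} − x_{j_k + k}) equals ∏_{s=n+1}^{m+n−1} (x_t − x_s). (For m = 1 both sides are the empty product 1.) -/
import Mathlib

open Finset

open scoped Classical in
private lemma lattice_key {R : Type*} [CommRing R] (x : ℕ → R) (t : ℕ) :
    ∀ (M n : ℕ), t ≤ n →
    (∑ j ∈ (Fintype.piFinset fun _ : Fin M => Icc t n).filter (fun j => Monotone j),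
        ∏ k : Fin M, (x (j k) - x (j k + ((k : ℕ) + 1))))
      = ∏ s ∈ Icc (n + 1) (n + M), (x t - x s) := by
  intro M
  induction M with
  | zero =>
    intro n hn
    have hmono : ∀ j : Fin 0 → ℕ, Monotone j := fun j a b _ => a.elim0
    rw [Finset.filter_true_of_mem (fun j _ => hmono j)]
    simp
  | succ M ih =>
    intro n hn
    have hreind :
        (∑ j ∈ (Fintype.piFinset fun _ : Fin (M+1) => Icc t n).filter (fun j => Monotone j),
            ∏ k : Fin (M+1), (x (j k) - x (j k + ((k : ℕ) + 1))))
        = ∑ p ∈ (Icc t n).sigma (fun v =>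
              (Fintype.piFinset fun _ : Fin M => Icc t v).filter (fun j => Monotone j)),
            (∏ k : Fin M, (x (p.2 k) - x (p.2 k + ((k : ℕ) + 1)))) *
              (x p.1 - x (p.1 + M + 1)) := by
      refine Finset.sum_nbij' (fun j => ⟨j (Fin.last M), fun k => j k.castSucc⟩)
        (fun p => Fin.snoc p.2 p.1) ?_ ?_ ?_ ?_ ?_
      · intro j hj
        simp only [mem_filter, Fintype.mem_piFinset, mem_Icc] at hj
        obtain ⟨hmem, hmono⟩ := hj
        simp only [mem_sigma, mem_filter, Fintype.mem_piFinset, mem_Icc]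
        refine ⟨⟨(hmem _).1, (hmem _).2⟩, fun k => ⟨(hmem _).1,
          hmono (Fin.le_last _)⟩, fun a b hab => hmono ?_⟩
        exact Fin.castSucc_le_castSucc_iff.mpr hab
      · intro p hp
        simp only [mem_sigma, mem_filter, Fintype.mem_piFinset, mem_Icc] at hp
        obtain ⟨hv, hmem, hmono⟩ := hp
        simp only [mem_filter, Fintype.mem_piFinset, mem_Icc]
        constructor
        · intro k
          refine Fin.lastCases ?_ ?_ k
          · simpa using hv
          · intro i
            simp only [Fin.snoc_castSucc]
            exact ⟨(hmem i).1, le_trans (hmem i).2 hv.2⟩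
        · rw [Fin.monotone_iff_le_succ]
          intro i
          rw [Fin.snoc_castSucc]
          rcases Fin.eq_castSucc_or_eq_last i.succ with ⟨j, hj⟩ | hj
          · rw [hj, Fin.snoc_castSucc]
            apply hmono
            have hij : (i : ℕ) + 1 = (j : ℕ) := by
              have := congrArg Fin.val hj
              simpa using this
            exact Fin.le_def.mpr (by omega)
          · rw [hj, Fin.snoc_last]
            exact (hmem i).2
      · intro j hj
        exact Fin.snoc_init_self j
      · intro p hp
        simp [Fin.snoc_last, Fin.init_snoc]
      · intro j hj
        simp only [mem_filter, Fintype.mem_piFinset, mem_Icc] at hj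
        rw [Fin.prod_univ_castSucc]
        simp only [Fin.coe_castSucc, Fin.val_last, ← add_assoc]
    rw [hreind, Finset.sum_sigma]
    have hstep : ∀ v ∈ Icc t n,
        (∑ j ∈ (Fintype.piFinset fun _ : Fin M => Icc t v).filter (fun j => Monotone j),
            (∏ k : Fin M, (x (j k) - x (j k + ((k : ℕ) + 1)))) * (x v - x (v + M + 1)))
        = (∏ s ∈ Icc (v + 1) ((v + 1) + M), (x t - x s))
          - (∏ s ∈ Icc v (v + M), (x t - x s)) := by
      intro v hv
      rw [mem_Icc] at hv
      rw [← Finset.sum_mul, ih v hv.1]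
      have h1 : (∏ s ∈ Icc (v+1) ((v+1) + M), (x t - x s))
          = (∏ s ∈ Icc (v+1) (v + M), (x t - x s)) * (x t - x (v + M + 1)) := by
        have h : (v + 1) + M = (v + M) + 1 := by omega
        rw [h, Finset.prod_Icc_succ_top (by omega)]
      have h2 : (∏ s ∈ Icc v (v + M), (x t - x s))
          = (x t - x v) * ∏ s ∈ Icc (v+1) (v + M), (x t - x s) := by
        rw [← Finset.Ico_add_one_right_eq_Icc, Finset.prod_eq_prod_Ico_succ_bot (by omega),
          Finset.Ico_add_one_right_eq_Icc]
      rw [h1, h2]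
      ring
    rw [Finset.sum_congr rfl hstep]
    have htel : ∀ N, t ≤ N →
        (∑ v ∈ Icc t N, ((∏ s ∈ Icc (v + 1) ((v + 1) + M), (x t - x s))
          - (∏ s ∈ Icc v (v + M), (x t - x s))))
        = (∏ s ∈ Icc (N + 1) ((N + 1) + M), (x t - x s))
          - (∏ s ∈ Icc t (t + M), (x t - x s)) := by
      intro N
      induction N with
      | zero =>
        intro hN
        have ht0 : t = 0 := by omega
        subst ht0; simp
      | succ N ihN =>
        intro hN
        rcases Nat.lt_or_ge t (N + 1) with h | h
        · rw [← Finset.Ico_add_one_right_eq_Icc, Finset.sum_Ico_succ_top (by omega),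
            Finset.Ico_add_one_right_eq_Icc, ihN (by omega)]
          ring
        · have ht : t = N + 1 := by omega
          subst ht
          simp
    rw [htel n hn]
    have hz : (∏ s ∈ Icc t (t + M), (x t - x s)) = 0 := by
      apply Finset.prod_eq_zero (Finset.mem_Icc.mpr ⟨le_refl t, by omega⟩)
      ring
    rw [hz, sub_zero, show (n + 1) + M = n + (M + 1) from by omega]

/-- For a commutative ring `R` and `x : ℕ → R` (indices 1-based),
for all `m, n ≥ 1` and `1 ≤ t ≤ n`, the sum over all weakly increasing sequences
`t ≤ j_1 ≤ … ≤ j_{m-1} ≤ n` of `∏_{k=1}^{m-1} (x_{j_k} - x_{j_k + k})`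
equals `∏_{s=n+1}^{m+n-1} (x_t - x_s)`. -/
theorem lattice_path_weight_sum_general {R : Type*} [CommRing R] (x : ℕ → R)
    (m n t : ℕ) (hm : 1 ≤ m) (hn : 1 ≤ n) (ht1 : 1 ≤ t) (ht2 : t ≤ n) :
    (∑ᶠ j : {j : Fin (m - 1) → ℕ // Monotone j ∧ ∀ k, t ≤ j k ∧ j k ≤ n},
      ∏ k : Fin (m - 1), (x (j.1 k) - x (j.1 k + ((k : ℕ) + 1))))
    = ∏ s ∈ Finset.Icc (n + 1) (m + n - 1), (x t - x s) := by
  classical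
  have hset : {j : Fin (m - 1) → ℕ | Monotone j ∧ ∀ k, t ≤ j k ∧ j k ≤ n}
      = ↑((Fintype.piFinset fun _ : Fin (m-1) => Icc t n).filter (fun j => Monotone j)) := by
    ext j
    simp only [Set.mem_setOf_eq, coe_filter, Fintype.mem_piFinset, mem_Icc,
      Set.mem_setOf_eq]
    tauto
  have h2 : ∀ i : Fin (m-1) → ℕ,
      (Monotone i ∧ ∀ k, t ≤ i k ∧ i k ≤ n)
      = (i ∈ (Fintype.piFinset fun _ : Fin (m-1) => Icc t n).filter (fun j => Monotone j)) := by
    intro i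
    simp only [mem_filter, Fintype.mem_piFinset, mem_Icc, eq_iff_iff]
    tauto
  rw [show (∑ᶠ j : {j : Fin (m - 1) → ℕ // Monotone j ∧ ∀ k, t ≤ j k ∧ j k ≤ n},
      ∏ k : Fin (m - 1), (x (j.1 k) - x (j.1 k + ((k : ℕ) + 1))))
    = ∑ᶠ (i : Fin (m-1) → ℕ) (_ : Monotone i ∧ ∀ k, t ≤ i k ∧ i k ≤ n),
      ∏ k : Fin (m - 1), (x (i k) - x (i k + ((k : ℕ) + 1)))
    from finsum_subtype_eq_finsum_cond
      (f := fun i : Fin (m - 1) → ℕ => ∏ k : Fin (m - 1), (x (i k) - x (i k + ((k : ℕ) + 1)))) _]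
  simp only [h2]
  rw [finsum_mem_finset_eq_sum, lattice_key x t (m-1) n ht2,
    show n + (m - 1) = m + n - 1 from by omega]
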